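/- Let f_0,…,f_m, g_0,…,g_n be a multilinear generalized polymorphism where f_0, g_0 depend on all inputs, all functions have degree ≥ 2, and f_1,…,f_m, g_1,…,g_n are balanced and 2-valued-like. Then for every i ∈ [n], the Fourier support of g_i contains a unique inclusion-maximal set, namely dep(g_i); and for every j ∈ [m], the Fourier support of f_j contains a unique inclusion-maximal set, namely dep(f_j). -/

import Mathlib

open Finset
open scoped Classical

/-- `x` lies on the Boolean cube `{-1,1}^ι`. -/
def IsCube {ι : Type*} (x : ι → ℝ) : Prop := ∀ i, x i = 1 ∨ x i = -1

/-- `f` depends on coordinate `w` (over the Boolean cube). -/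
def DependsOnCube {ι : Type*} [DecidableEq ι] (f : (ι → ℝ) → ℝ) (w : ι) : Prop :=
  ∃ x : ι → ℝ, IsCube x ∧ f (Function.update x w 1) ≠ f (Function.update x w (-1))

/-- The coefficient function `c` is that of a dictator (nonconstant, depending on a
single coordinate). -/
def IsDictatorCoeff {ι : Type*} [DecidableEq ι] (c : Finset ι → ℝ) : Prop :=
  ∃ w : ι, c {w} ≠ 0 ∧ ∀ S : Finset ι, c S ≠ 0 → S ⊆ {w}

/-- The multilinear polynomial with coefficients `c` has degree exactly 1. -/
def HasDegreeOne {ι : Type*} (c : Finset ι → ℝ) : Prop :=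
  (∀ S : Finset ι, c S ≠ 0 → S.card ≤ 1) ∧ ∃ S : Finset ι, c S ≠ 0 ∧ S.card = 1

/-- `c` is the coefficient function of a 2-valued-like function. -/
def TwoValuedLike {ι : Type*} [DecidableEq ι] (c : Finset ι → ℝ) : Prop :=
  (HasDegreeOne c ↔ IsDictatorCoeff c) ∧
  (¬ IsDictatorCoeff c → ∀ w : ι, (∃ S, c S ≠ 0 ∧ w ∈ S) →
    ∃ S : Finset ι, c S ≠ 0 ∧ 2 ≤ S.card ∧ w ∈ S)

/-
Comparing the coefficients of `∏_{(i,j) ∈ ρ} z i j` on both sides of the polymorphism identity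
(orthogonality of the characters of the cube `{-1,1}^{n×m}`) gives, for balanced inner functions,
`f̂₀(R) · ∏_{i ∈ R} ĝᵢ(ρᵢ) = ĝ₀(C) · ∏_{j ∈ C} f̂ⱼ(ρʲ)`, where `ρᵢ`, `ρʲ` are the rows and
columns of the pattern `ρ ⊆ [n] × [m]` and `R`, `C` index the nonempty ones. So a nonzero
pattern can be read either row by row or column by column.

Let `T` be a support set of `gᵢ` of maximal size and `j` a relevant coordinate of `gᵢ`. Then `i`
is relevant for `fⱼ`, and as `fⱼ` is 2-valued-like, some support set `N ∋ i` of `fⱼ` has a second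
element `i'`. Reading a pattern with column `j` equal to `N` row by row, and replacing row `i` by
`T`, gives a support set of `g₀` containing `T` and, through row `i'`, also `j`. Reading that one
column by column, with columns through `i` wherever possible, row `i` becomes a support set of `gᵢ`
containing `T ∪ {j}`; by maximality `j ∈ T`.
-/

namespace Polymorphism

section Fourier

variable {ι : Type*}

def bsign (b : Bool) : ℝ := if b then 1 else -1

@[simp] lemma bsign_true : bsign true = 1 := rfl

@[simp] lemma bsign_false : bsign false = -1 := rfl

lemma bsign_not (b : Bool) : bsign (!b) = -bsign b := by
  cases b <;> simp

lemma isCube_bsign_comp (σ : ι → Bool) : IsCube (bsign ∘ σ) := fun i => by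
  simp only [Function.comp_apply]
  cases σ i <;> simp

def chi (S : Finset ι) (σ : ι → Bool) : ℝ := ∏ i ∈ S, bsign (σ i)

def mlEval [Fintype ι] (c : Finset ι → ℝ) (x : ι → ℝ) : ℝ := ∑ S, c S * ∏ i ∈ S, x i

lemma mlEval_bsign_comp [Fintype ι] (c : Finset ι → ℝ) (σ : ι → Bool) :
    mlEval c (bsign ∘ σ) = ∑ S, c S * chi S σ := rfl

lemma sum_chi_mul_chi [Fintype ι] [DecidableEq ι] (S T : Finset ι) :
    ∑ σ : ι → Bool, chi S σ * chi T σ = if S = T then 2 ^ Fintype.card ι else 0 := by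
  have hfactor : ∀ i, ∑ b : Bool, (if i ∈ S then bsign b else 1) * (if i ∈ T then bsign b else 1)
      = if (i ∈ S ↔ i ∈ T) then 2 else 0 := by
    intro i
    by_cases hS : i ∈ S <;> by_cases hT : i ∈ T <;> simp [hS, hT, one_add_one_eq_two]
  calc ∑ σ : ι → Bool, chi S σ * chi T σ
      = ∑ σ : ι → Bool, ∏ i, (if i ∈ S then bsign (σ i) else 1) *
          (if i ∈ T then bsign (σ i) else 1) := by
        simp only [chi, prod_mul_distrib, Fintype.prod_ite_mem]
    _ = ∏ i, ∑ b : Bool, (if i ∈ S then bsign b else 1) * (if i ∈ T then bsign b else 1) :=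
        (Fintype.prod_sum fun i b =>
          (if i ∈ S then bsign b else 1) * (if i ∈ T then bsign b else 1)).symm
    _ = ∏ i, if (i ∈ S ↔ i ∈ T) then (2 : ℝ) else 0 := by simp only [hfactor]
    _ = if S = T then 2 ^ Fintype.card ι else 0 := by
        rw [prod_ite_zero]
        simp [← Finset.ext_iff]

lemma sum_chi [Fintype ι] [DecidableEq ι] (T : Finset ι) :
    ∑ σ : ι → Bool, chi T σ = if T = ∅ then 2 ^ Fintype.card ι else 0 := by
  simpa [chi, eq_comm] using sum_chi_mul_chi ∅ T

lemma sum_mlEval_mul_chi [Fintype ι] [DecidableEq ι] (c : Finset ι → ℝ) (T : Finset ι) :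
    ∑ σ : ι → Bool, mlEval c (bsign ∘ σ) * chi T σ = 2 ^ Fintype.card ι * c T := by
  simp only [mlEval_bsign_comp, sum_mul, mul_assoc]
  rw [sum_comm]
  simp [← mul_sum, sum_chi_mul_chi, mul_comm]

def flipAt [DecidableEq ι] (w : ι) (σ : ι → Bool) : ι → Bool := Function.update σ w (!σ w)

lemma flipAt_involutive [DecidableEq ι] (w : ι) : Function.Involutive (flipAt w) := fun σ => by
  simp [flipAt]

lemma chi_flipAt [DecidableEq ι] {S : Finset ι} {w : ι} (hw : w ∈ S) (σ : ι → Bool) :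
    chi S (flipAt w σ) = -chi S σ := by
  have hrest : ∏ i ∈ S.erase w, bsign (flipAt w σ i) = ∏ i ∈ S.erase w, bsign (σ i) :=
    prod_congr rfl fun i hi => by rw [flipAt, Function.update_of_ne (ne_of_mem_erase hi)]
  rw [chi, chi, ← mul_prod_erase S _ hw, ← mul_prod_erase S _ hw, hrest, flipAt,
    Function.update_self, bsign_not, neg_mul]

lemma mlEval_flipAt [Fintype ι] [DecidableEq ι] {c : Finset ι → ℝ} {w : ι}
    (h : ¬ DependsOnCube (mlEval c) w) (σ : ι → Bool) :
    mlEval c (bsign ∘ flipAt w σ) = mlEval c (bsign ∘ σ) := by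
  have hconst : ∀ b, mlEval c (bsign ∘ Function.update σ w b)
      = mlEval c (bsign ∘ Function.update σ w true) := by
    rintro (_ | _)
    · by_contra hne
      exact h ⟨bsign ∘ σ, isCube_bsign_comp σ, by simpa [Function.comp_update] using Ne.symm hne⟩
    · rfl
  rw [flipAt, hconst, ← hconst (σ w), Function.update_eq_self]

lemma coeff_eq_zero_of_not_dependsOnCube [Fintype ι] [DecidableEq ι] {c : Finset ι → ℝ}
    {w : ι} (h : ¬ DependsOnCube (mlEval c) w) {S : Finset ι} (hw : w ∈ S) : c S = 0 := by
  -- flipping `w` is a bijection of the cube that fixes `mlEval c` and negates `chi S`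
  have hflip := Equiv.sum_comp ((flipAt_involutive w).toPerm _)
    fun σ => mlEval c (bsign ∘ σ) * chi S σ
  simp only [Function.Involutive.coe_toPerm, mlEval_flipAt h, chi_flipAt hw, mul_neg,
    sum_neg_distrib, neg_eq_self, sum_mlEval_mul_chi] at hflip
  simpa using hflip

end Fourier

section Composition

variable {ι κ : Type*}

def rows [Fintype ι] (ρ : ι → Finset κ) : Finset ι := univ.filter fun i => (ρ i).Nonempty

def transpose [Fintype ι] [DecidableEq κ] (ρ : ι → Finset κ) : κ → Finset ι :=
  fun j => univ.filter fun i => j ∈ ρ i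

/-- With `ρ` read as the set `{(i, j) | j ∈ ρ i}`, this is the coefficient of `∏_{(i,j) ∈ ρ} z i j`
in `a ∘ (p i)ᵢ` when every `p i` is balanced. -/
def compCoeff [Fintype ι] (a : Finset ι → ℝ) (p : ι → Finset κ → ℝ) (ρ : ι → Finset κ) : ℝ :=
  a (rows ρ) * ∏ i ∈ rows ρ, p i (ρ i)

lemma compCoeff_ne_zero_iff [Fintype ι] {a : Finset ι → ℝ} {p : ι → Finset κ → ℝ}
    {ρ : ι → Finset κ} :
    compCoeff a p ρ ≠ 0 ↔ a (rows ρ) ≠ 0 ∧ ∀ i ∈ rows ρ, p i (ρ i) ≠ 0 := by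
  simp [compCoeff, prod_ne_zero_iff]

lemma prod_ite_eq_ite_rows [Fintype ι] [DecidableEq ι] [DecidableEq κ]
    {p : ι → Finset κ → ℝ} (hp : ∀ i, p i ∅ = 0) (S : Finset ι) (ρ : ι → Finset κ) :
    ∏ i, (if i ∈ S then p i (ρ i) else if ρ i = ∅ then 1 else 0)
      = if S = rows ρ then ∏ i ∈ rows ρ, p i (ρ i) else 0 := by
  have hfactor : ∀ i, (if i ∈ S then p i (ρ i) else if ρ i = ∅ then 1 else 0)
      = if (i ∈ S ↔ i ∈ rows ρ) then (if i ∈ S then p i (ρ i) else 1) else 0 := by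
    intro i
    by_cases hS : i ∈ S <;> by_cases hρ : ρ i = ∅ <;>
      simp [rows, hS, hρ, hp, nonempty_iff_ne_empty]
  rw [prod_congr rfl fun i _ => hfactor i, prod_ite_zero]
  simp only [mem_univ, true_implies, ← Finset.ext_iff]
  split_ifs with h
  · rw [Fintype.prod_ite_mem, h]
  · rfl

lemma sum_prod_mlEval_mul_prod_chi [Fintype ι] [DecidableEq ι] [Fintype κ] [DecidableEq κ]
    {p : ι → Finset κ → ℝ} (hp : ∀ i, p i ∅ = 0) (S : Finset ι) (ρ : ι → Finset κ) :
    ∑ σ : ι → κ → Bool, (∏ i ∈ S, mlEval (p i) (bsign ∘ σ i)) * ∏ i, chi (ρ i) (σ i)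
      = 2 ^ (Fintype.card ι * Fintype.card κ) *
          if S = rows ρ then ∏ i ∈ rows ρ, p i (ρ i) else 0 := by
  set h : ι → (κ → Bool) → ℝ :=
    fun i τ => (if i ∈ S then mlEval (p i) (bsign ∘ τ) else 1) * chi (ρ i) τ
  have hrow : ∀ i, ∑ τ, h i τ
      = 2 ^ Fintype.card κ * (if i ∈ S then p i (ρ i) else if ρ i = ∅ then 1 else 0) := by
    intro i
    by_cases hi : i ∈ S <;> simp [h, hi, sum_mlEval_mul_chi, sum_chi]
  calc _ = ∑ σ : ι → κ → Bool, ∏ i, h i (σ i) := by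
        simp only [h, prod_mul_distrib, Fintype.prod_ite_mem]
    _ = ∏ i, ∑ τ, h i τ := (Fintype.prod_sum h).symm
    _ = _ := by
        rw [prod_congr rfl fun i _ => hrow i, prod_mul_distrib, prod_const, card_univ,
          ← pow_mul, prod_ite_eq_ite_rows hp, mul_comm (Fintype.card κ)]

lemma sum_mlEval_comp_mul_prod_chi [Fintype ι] [DecidableEq ι] [Fintype κ] [DecidableEq κ]
    (a : Finset ι → ℝ) {p : ι → Finset κ → ℝ} (hp : ∀ i, p i ∅ = 0) (ρ : ι → Finset κ) :
    ∑ σ : ι → κ → Bool, mlEval a (fun i => mlEval (p i) (bsign ∘ σ i)) * ∏ i, chi (ρ i) (σ i)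
      = 2 ^ (Fintype.card ι * Fintype.card κ) * compCoeff a p ρ := by
  calc _ = ∑ S, a S * ∑ σ : ι → κ → Bool,
        (∏ i ∈ S, mlEval (p i) (bsign ∘ σ i)) * ∏ i, chi (ρ i) (σ i) := by
        simp only [mul_sum]
        rw [sum_comm]
        refine sum_congr rfl fun σ _ => ?_
        rw [mlEval, sum_mul]
        simp only [mul_assoc]
    _ = _ := by simp [sum_prod_mlEval_mul_prod_chi hp, compCoeff, mul_left_comm]

lemma prod_chi_transpose [Fintype ι] [Fintype κ] [DecidableEq κ] (ρ : ι → Finset κ)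
    (σ : ι → κ → Bool) :
    ∏ i, chi (ρ i) (σ i) = ∏ j, chi (transpose ρ j) (fun i => σ i j) :=
  prod_comm' (by simp [transpose])

lemma compCoeff_eq_of_forall_cube [Fintype ι] [DecidableEq ι] [Fintype κ] [DecidableEq κ]
    {a : Finset ι → ℝ} {b : Finset κ → ℝ} {p : ι → Finset κ → ℝ} {q : κ → Finset ι → ℝ}
    (hp : ∀ i, p i ∅ = 0) (hq : ∀ j, q j ∅ = 0)
    (h : ∀ z : ι → κ → ℝ, (∀ i j, z i j = 1 ∨ z i j = -1) →
      mlEval a (fun i => mlEval (p i) (z i)) = mlEval b (fun j => mlEval (q j) (fun i => z i j)))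
    (ρ : ι → Finset κ) :
    compCoeff a p ρ = compCoeff b q (transpose ρ) := by
  have hsum : 2 ^ (Fintype.card ι * Fintype.card κ) * compCoeff a p ρ
      = 2 ^ (Fintype.card κ * Fintype.card ι) * compCoeff b q (transpose ρ) := by
    rw [← sum_mlEval_comp_mul_prod_chi a hp, ← sum_mlEval_comp_mul_prod_chi b hq]
    refine Fintype.sum_equiv (Equiv.piComm _) _ _ fun σ => ?_
    rw [h _ fun i j => isCube_bsign_comp (σ i) j, prod_chi_transpose]
    rfl
  rw [mul_comm (Fintype.card κ)] at hsum
  exact mul_left_cancel₀ (by positivity) hsum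

end Composition

section Support

variable {ι : Type*} [Fintype ι]

noncomputable def supportUnion (c : Finset ι → ℝ) : Finset ι :=
  univ.filter fun w => ∃ S, c S ≠ 0 ∧ w ∈ S

@[simp] lemma mem_supportUnion {c : Finset ι → ℝ} {w : ι} :
    w ∈ supportUnion c ↔ ∃ S, c S ≠ 0 ∧ w ∈ S := by
  simp [supportUnion]

lemma subset_supportUnion {c : Finset ι → ℝ} {S : Finset ι} (h : c S ≠ 0) :
    S ⊆ supportUnion c := fun _ hw => mem_supportUnion.2 ⟨S, h, hw⟩

lemma mlEval_update_eq_of_notMem_supportUnion [DecidableEq ι] {c : Finset ι → ℝ} {w : ι}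
    (hw : w ∉ supportUnion c) (x : ι → ℝ) (u v : ℝ) :
    mlEval c (Function.update x w u) = mlEval c (Function.update x w v) := by
  refine sum_congr rfl fun S _ => ?_
  by_cases hS : c S = 0
  · simp [hS]
  have hwS : w ∉ S := fun hwS => hw (mem_supportUnion.2 ⟨S, hS, hwS⟩)
  congr 1
  refine prod_congr rfl fun i hi => ?_
  have hiw : i ≠ w := ne_of_mem_of_not_mem hi hwS
  rw [Function.update_of_ne hiw, Function.update_of_ne hiw]

lemma dependsOnCube_mlEval_iff [DecidableEq ι] (c : Finset ι → ℝ) (w : ι) :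
    DependsOnCube (mlEval c) w ↔ w ∈ supportUnion c := by
  constructor
  · rintro ⟨x, -, hx⟩
    by_contra hw
    exact hx (mlEval_update_eq_of_notMem_supportUnion hw x 1 (-1))
  · intro hw
    obtain ⟨S, hS, hwS⟩ := mem_supportUnion.1 hw
    by_contra h
    exact hS (coeff_eq_zero_of_not_dependsOnCube h hwS)

lemma filter_dependsOnCube_mlEval [DecidableEq ι] (c : Finset ι → ℝ) :
    univ.filter (fun w => DependsOnCube (mlEval c) w) = supportUnion c := by
  ext w
  simp [dependsOnCube_mlEval_iff]

def LargeSupportCover (c : Finset ι → ℝ) : Prop :=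
  ∀ w ∈ supportUnion c, ∃ S, c S ≠ 0 ∧ 2 ≤ S.card ∧ w ∈ S

lemma _root_.TwoValuedLike.largeSupportCover [DecidableEq ι] {c : Finset ι → ℝ}
    (h : TwoValuedLike c) (hdeg : ∃ S, c S ≠ 0 ∧ 2 ≤ S.card) : LargeSupportCover c := by
  have hnd : ¬ IsDictatorCoeff c := fun hd => by
    obtain ⟨S, hS, hcard⟩ := hdeg
    have := (h.1.2 hd).1 S hS
    omega
  exact fun w hw => h.2 hnd w (mem_supportUnion.1 hw)

end Support

section Combinatorics

variable {ι κ : Type*} [Fintype ι] [DecidableEq ι] [Fintype κ] [DecidableEq κ]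

lemma transpose_transpose (ρ : ι → Finset κ) : transpose (transpose ρ) = ρ := by
  ext i j
  simp [transpose]

structure CoeffPolymorphism (a : Finset ι → ℝ) (b : Finset κ → ℝ)
    (p : ι → Finset κ → ℝ) (q : κ → Finset ι → ℝ) : Prop where
  compCoeff_eq : ∀ ρ, compCoeff a p ρ = compCoeff b q (transpose ρ)
  p_empty : ∀ i, p i ∅ = 0
  q_empty : ∀ j, q j ∅ = 0
  exists_p_ne_zero : ∀ i, ∃ T, p i T ≠ 0
  exists_q_ne_zero : ∀ j, ∃ S, q j S ≠ 0
  mem_supportUnion_a : ∀ i, i ∈ supportUnion a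
  mem_supportUnion_b : ∀ j, j ∈ supportUnion b

namespace CoeffPolymorphism

variable {a : Finset ι → ℝ} {b : Finset κ → ℝ} {p : ι → Finset κ → ℝ} {q : κ → Finset ι → ℝ}

lemma symm (h : CoeffPolymorphism a b p q) : CoeffPolymorphism b a q p where
  compCoeff_eq ρ := by rw [h.compCoeff_eq, transpose_transpose]
  p_empty := h.q_empty
  q_empty := h.p_empty
  exists_p_ne_zero := h.exists_q_ne_zero
  exists_q_ne_zero := h.exists_p_ne_zero
  mem_supportUnion_a := h.mem_supportUnion_b
  mem_supportUnion_b := h.mem_supportUnion_a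

lemma dual_ne_zero (h : CoeffPolymorphism a b p q) {R : Finset ι} (hR : a R ≠ 0)
    {M : ι → Finset κ} (hM : ∀ i ∈ R, p i (M i) ≠ 0) :
    b (R.biUnion M) ≠ 0 ∧ ∀ j ∈ R.biUnion M, q j (R.filter fun i => j ∈ M i) ≠ 0 := by
  set ρ : ι → Finset κ := fun i => if i ∈ R then M i else ∅
  have hrows : rows ρ = R := by
    ext i
    by_cases hi : i ∈ R
    · simp only [rows, ρ, mem_filter, mem_univ, true_and, hi, ↓reduceIte, iff_true]
      exact nonempty_iff_ne_empty.2 fun hMi => hM i hi (hMi ▸ h.p_empty i)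
    · simp [rows, ρ, hi]
  have htranspose : ∀ j, transpose ρ j = R.filter fun i => j ∈ M i := by
    intro j
    ext i
    by_cases hi : i ∈ R <;> simp [transpose, ρ, hi]
  have hrowsT : rows (transpose ρ) = R.biUnion M := by
    ext j
    simp [rows, htranspose, Finset.Nonempty]
  have hne : compCoeff b q (transpose ρ) ≠ 0 := by
    rw [← h.compCoeff_eq, compCoeff_ne_zero_iff, hrows]
    exact ⟨hR, fun i hi => by simpa [ρ, hi] using hM i hi⟩
  rw [compCoeff_ne_zero_iff, hrowsT] at hne
  exact ⟨hne.1, fun j hj => htranspose j ▸ hne.2 j hj⟩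

lemma mem_supportUnion_swap (h : CoeffPolymorphism a b p q) {i : ι} {j : κ}
    (hj : j ∈ supportUnion (p i)) : i ∈ supportUnion (q j) := by
  obtain ⟨T, hT, hjT⟩ := mem_supportUnion.1 hj
  obtain ⟨R, hR, hiR⟩ := mem_supportUnion.1 (h.mem_supportUnion_a i)
  choose P hP using h.exists_p_ne_zero
  have hM : ∀ i', p i' (Function.update P i T i') ≠ 0 :=
    Function.forall_update_iff P (p := fun i' T' => p i' T' ≠ 0) |>.2 ⟨hT, fun i' _ => hP i'⟩
  have hjR : j ∈ R.biUnion (Function.update P i T) :=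
    mem_biUnion.2 ⟨i, hiR, by simpa using hjT⟩
  exact mem_supportUnion.2 ⟨_, (h.dual_ne_zero hR fun i' _ => hM i').2 j hjR,
    mem_filter.2 ⟨hiR, by simpa using hjT⟩⟩

lemma exists_p_ne_zero_superset (h : CoeffPolymorphism a b p q) {i : ι} {C : Finset κ}
    (hC : b C ≠ 0) {j : κ} (hjC : j ∈ C) (hj : j ∈ supportUnion (p i)) :
    ∃ T, p i T ≠ 0 ∧ C ∩ supportUnion (p i) ⊆ T := by
  have hN : ∀ j', ∃ N, q j' N ≠ 0 ∧ (j' ∈ supportUnion (p i) → i ∈ N) := by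
    intro j'
    by_cases hj' : j' ∈ supportUnion (p i)
    · obtain ⟨N, hN, hiN⟩ := mem_supportUnion.1 (h.mem_supportUnion_swap hj')
      exact ⟨N, hN, fun _ => hiN⟩
    · obtain ⟨N, hN⟩ := h.exists_q_ne_zero j'
      exact ⟨N, hN, fun hj'' => absurd hj'' hj'⟩
  choose N hN hiN using hN
  obtain ⟨-, hrow⟩ := h.symm.dual_ne_zero hC fun j' _ => hN j'
  refine ⟨C.filter fun j' => i ∈ N j', hrow i (mem_biUnion.2 ⟨j, hjC, hiN j hj⟩), ?_⟩
  intro j' hj'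
  rw [mem_inter] at hj'
  exact mem_filter.2 ⟨hj'.1, hiN j' hj'.2⟩

lemma exists_b_ne_zero_superset (h : CoeffPolymorphism a b p q)
    (hq : ∀ j, LargeSupportCover (q j)) {i : ι} {T : Finset κ} (hT : p i T ≠ 0) {j : κ}
    (hj : j ∈ supportUnion (p i)) : ∃ C, b C ≠ 0 ∧ T ⊆ C ∧ j ∈ C := by
  obtain ⟨N, hN, hcard, hiN⟩ := hq j i (h.mem_supportUnion_swap hj)
  obtain ⟨i', hi'N, hi'i⟩ := exists_mem_ne hcard i
  obtain ⟨C, hC, hjC⟩ := mem_supportUnion.1 (h.mem_supportUnion_b j)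
  choose Q hQ using h.exists_q_ne_zero
  set N' := Function.update Q j N
  have hN' : ∀ j', q j' (N' j') ≠ 0 :=
    Function.forall_update_iff Q (p := fun j' S => q j' S ≠ 0) |>.2 ⟨hN, fun j' _ => hQ j'⟩
  obtain ⟨hR, hrow⟩ := h.symm.dual_ne_zero hC fun j' _ => hN' j'
  set M := Function.update (fun i'' => C.filter fun j' => i'' ∈ N' j') i T
  have hmem : ∀ i'' ∈ N, i'' ∈ C.biUnion N' := fun i'' hi'' =>
    mem_biUnion.2 ⟨j, hjC, by simpa [N'] using hi''⟩
  have hM : ∀ i'' ∈ C.biUnion N', p i'' (M i'') ≠ 0 := by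
    intro i'' hi''
    rcases eq_or_ne i'' i with rfl | hne
    · simpa [M] using hT
    · simpa [M, hne] using hrow i'' hi''
  refine ⟨_, (h.dual_ne_zero hR hM).1, fun j' hj' => mem_biUnion.2 ⟨i, hmem i hiN, ?_⟩,
    mem_biUnion.2 ⟨i', hmem i' hi'N, ?_⟩⟩
  · simpa [M] using hj'
  · simp [M, N', hi'i, hjC, hi'N]

theorem p_supportUnion_ne_zero (h : CoeffPolymorphism a b p q)
    (hq : ∀ j, LargeSupportCover (q j)) (i : ι) : p i (supportUnion (p i)) ≠ 0 := by
  obtain ⟨T, hT, hmax⟩ := exists_max_image (univ.filter fun T => p i T ≠ 0) card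
    (by simpa [Finset.Nonempty] using h.exists_p_ne_zero i)
  simp only [mem_filter, mem_univ, true_and] at hT hmax
  suffices hTU : T = supportUnion (p i) by rwa [← hTU]
  refine (subset_supportUnion hT).antisymm fun j hj => ?_
  obtain ⟨C, hC, hTC, hjC⟩ := h.exists_b_ne_zero_superset hq hT hj
  obtain ⟨T', hT', hCT'⟩ := h.exists_p_ne_zero_superset hC hjC hj
  have hTT' : T ⊆ T' := fun k hk => hCT' (mem_inter.2 ⟨hTC hk, subset_supportUnion hT hk⟩)
  rw [eq_of_subset_of_card_le hTT' (hmax T' hT')]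
  exact hCT' (mem_inter.2 ⟨hjC, hj⟩)

end CoeffPolymorphism

end Combinatorics

end Polymorphism

/-- For a multilinear generalized polymorphism with `f₀, g₀` depending
on all inputs, all functions of degree ≥ 2 and balanced 2-valued-like inner functions:
every `gᵢ` and every `fⱼ` has a unique inclusion-maximal Fourier support set, namely its
set of relevant coordinates. -/
theorem stmt_19 (n m : ℕ)
    (f : Fin (m + 1) → (Fin n → ℝ) → ℝ) (g : Fin (n + 1) → (Fin m → ℝ) → ℝ)
    (fc : Fin (m + 1) → Finset (Fin n) → ℝ) (gc : Fin (n + 1) → Finset (Fin m) → ℝ)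
    (hfexp : ∀ (j : Fin (m + 1)) (x : Fin n → ℝ),
      f j x = ∑ S : Finset (Fin n), fc j S * ∏ i ∈ S, x i)
    (hgexp : ∀ (i : Fin (n + 1)) (y : Fin m → ℝ),
      g i y = ∑ T : Finset (Fin m), gc i T * ∏ j ∈ T, y j)
    (hdegf : ∀ j : Fin (m + 1), ∃ S : Finset (Fin n), fc j S ≠ 0 ∧ 2 ≤ S.card)
    (hdegg : ∀ i : Fin (n + 1), ∃ T : Finset (Fin m), gc i T ≠ 0 ∧ 2 ≤ T.card)
    (hbalf : ∀ j : Fin m, fc j.succ ∅ = 0)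
    (hbalg : ∀ i : Fin n, gc i.succ ∅ = 0)
    (h2vf : ∀ j : Fin m, TwoValuedLike (fc j.succ))
    (h2vg : ∀ i : Fin n, TwoValuedLike (gc i.succ))
    (hf0dep : ∀ i : Fin n, DependsOnCube (f 0) i)
    (hg0dep : ∀ j : Fin m, DependsOnCube (g 0) j)
    (hpoly : ∀ z : Fin n → Fin m → ℝ, (∀ i j, z i j = 1 ∨ z i j = -1) →
      f 0 (fun i => g i.succ (z i)) = g 0 (fun j => f j.succ (fun i => z i j))) :
    (∀ i : Fin n,
      gc i.succ (univ.filter (fun j => DependsOnCube (g i.succ) j)) ≠ 0 ∧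
      ∀ T : Finset (Fin m), gc i.succ T ≠ 0 →
        T ⊆ univ.filter (fun j => DependsOnCube (g i.succ) j)) ∧
    (∀ j : Fin m,
      fc j.succ (univ.filter (fun i => DependsOnCube (f j.succ) i)) ≠ 0 ∧
      ∀ S : Finset (Fin n), fc j.succ S ≠ 0 →
        S ⊆ univ.filter (fun i => DependsOnCube (f j.succ) i)) := by
  obtain rfl : f = fun j => Polymorphism.mlEval (fc j) := funext₂ hfexp
  obtain rfl : g = fun i => Polymorphism.mlEval (gc i) := funext₂ hgexp
  have hP : Polymorphism.CoeffPolymorphism (fc 0) (gc 0) (gc ·.succ) (fc ·.succ) :=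
    { compCoeff_eq := Polymorphism.compCoeff_eq_of_forall_cube hbalg hbalf hpoly
      p_empty := hbalg
      q_empty := hbalf
      exists_p_ne_zero := fun i => (hdegg i.succ).imp fun _ hT => hT.1
      exists_q_ne_zero := fun j => (hdegf j.succ).imp fun _ hS => hS.1
      mem_supportUnion_a := fun i => (Polymorphism.dependsOnCube_mlEval_iff _ _).1 (hf0dep i)
      mem_supportUnion_b := fun j => (Polymorphism.dependsOnCube_mlEval_iff _ _).1 (hg0dep j) }
  have hf2 := fun j => (h2vf j).largeSupportCover (hdegf j.succ)
  have hg2 := fun i => (h2vg i).largeSupportCover (hdegg i.succ)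
  simp only [Polymorphism.filter_dependsOnCube_mlEval]
  exact ⟨fun i => ⟨hP.p_supportUnion_ne_zero hf2 i, fun _ => Polymorphism.subset_supportUnion⟩,
    fun j => ⟨hP.symm.p_supportUnion_ne_zero hg2 j, fun _ => Polymorphism.subset_supportUnion⟩⟩
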